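/- In the subspace T' = T∖{a} of the five-point space T, the set {x,y,b} is regular closed, its interior in T' equals {x,y}, and {x,y} is not a preconnected subspace of T'; hence {x,y,b} is not internally connected. -/

import Mathlib

/-- The five-point space `T = {x, y, z, a, b}` (five pairwise distinct points). -/
inductive Pt : Type
  | x | y | z | a | b
deriving DecidableEq

open Pt

/-- The topology on `T` generated by the subbasis `{x,z}`, `{y,z}`, `{x,a,y}`. -/
instance : TopologicalSpace Pt :=
  TopologicalSpace.generateFrom ({{x, z}, {y, z}, {x, a, y}} : Set (Set Pt))

/-! The point `b` lies in no subbasic open set, so its only neighbourhood, in `T` and in `T'`,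
is the whole space: `b` is in the closure of every nonempty set and in the interior of no proper
one. The traces of `{x,z}` and `{y,z}` on `T'` separate `x` from `y`. -/

open Set Filter Topology

theorem TopologicalSpace.nhds_generateFrom_eq_top {α : Type*} {g : Set (Set α)} {p : α}
    (hp : ∀ s ∈ g, p ∉ s) : @nhds α (generateFrom g) p = ⊤ := by
  rw [nhds_generateFrom]
  exact iInf₂_eq_top.2 fun s hs => (hp s hs.2 hs.1).elim

section NhdsEqTop

variable {X : Type*} [TopologicalSpace X] {p : X}

theorem mem_closure_of_nhds_eq_top (hp : 𝓝 p = ⊤) {s : Set X} (hs : s.Nonempty) :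
    p ∈ closure s := by
  rw [mem_closure_iff_clusterPt, ClusterPt, hp, top_inf_eq]
  exact hs.principal_neBot

theorem eq_univ_of_mem_interior_of_nhds_eq_top (hp : 𝓝 p = ⊤) {s : Set X}
    (hs : p ∈ interior s) : s = univ := by
  rwa [mem_interior_iff_mem_nhds, hp, mem_top] at hs

end NhdsEqTop

theorem not_isPreconnected_pair {X : Type*} [TopologicalSpace X] {p q : X} {U V : Set X}
    (hU : IsOpen U) (hV : IsOpen V) (hpU : p ∈ U) (hqV : q ∈ V) (hqU : q ∉ U) (hpV : p ∉ V) :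
    ¬ IsPreconnected ({p, q} : Set X) := by
  intro h
  obtain ⟨r, hr, hrU, hrV⟩ := h U V hU hV (pair_subset (mem_union_left _ hpU)
    (mem_union_right _ hqV)) ⟨p, by simp, hpU⟩ ⟨q, by simp, hqV⟩
  rcases hr with rfl | rfl
  exacts [hpV hrV, hqU hrU]

namespace Pt

local notation "T'" => {t : Pt // t ≠ a}

theorem nhds_b_eq_top : 𝓝 b = ⊤ :=
  TopologicalSpace.nhds_generateFrom_eq_top (by simp)

theorem nhds_subtype_b_eq_top : 𝓝 (⟨b, by decide⟩ : T') = ⊤ := by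
  rw [nhds_induced, nhds_b_eq_top, comap_top]

theorem isOpen_preimage_xy : IsOpen (Subtype.val ⁻¹' ({x, y} : Set Pt) : Set T') := by
  have h : IsOpen ({x, a, y} : Set Pt) := .basic _ (by simp)
  convert h.preimage continuous_subtype_val using 1
  ext ⟨t, ht⟩
  cases t <;> simp at ht ⊢

theorem isClosed_preimage_xyb : IsClosed (Subtype.val ⁻¹' ({x, y, b} : Set Pt) : Set T') := by
  have hxz : IsOpen ({x, z} : Set Pt) := .basic _ (by simp)
  have hyz : IsOpen ({y, z} : Set Pt) := .basic _ (by simp)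
  rw [← isOpen_compl_iff]
  convert (hxz.inter hyz).preimage continuous_subtype_val using 1
  ext ⟨t, ht⟩
  cases t <;> simp at ht ⊢

theorem closure_preimage_xy :
    closure (Subtype.val ⁻¹' ({x, y} : Set Pt) : Set T') = Subtype.val ⁻¹' {x, y, b} := by
  refine (closure_minimal ?_ isClosed_preimage_xyb).antisymm ?_
  · exact preimage_mono (by simp [subset_def])
  rintro ⟨t, ht⟩ htxyb
  obtain rfl | rfl | rfl : t = x ∨ t = y ∨ t = b := htxyb
  · exact subset_closure (by simp)
  · exact subset_closure (by simp)
  · exact mem_closure_of_nhds_eq_top nhds_subtype_b_eq_top ⟨⟨x, by decide⟩, by simp⟩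

theorem interior_preimage_xyb :
    interior (Subtype.val ⁻¹' ({x, y, b} : Set Pt) : Set T') = Subtype.val ⁻¹' {x, y} := by
  refine subset_antisymm ?_ (interior_maximal (preimage_mono (by simp [subset_def]))
    isOpen_preimage_xy)
  rintro ⟨t, ht⟩ htint
  obtain rfl | rfl | rfl : t = x ∨ t = y ∨ t = b :=
    interior_subset (s := Subtype.val ⁻¹' _) htint
  · simp
  · simp
  · have hz := (eq_univ_of_mem_interior_of_nhds_eq_top nhds_subtype_b_eq_top htint).ge
      (mem_univ (⟨z, by decide⟩ : T'))
    simp at hz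

theorem not_isPreconnected_preimage_xy :
    ¬ IsPreconnected (Subtype.val ⁻¹' ({x, y} : Set Pt) : Set T') := by
  have hxz : IsOpen ({x, z} : Set Pt) := .basic _ (by simp)
  have hyz : IsOpen ({y, z} : Set Pt) := .basic _ (by simp)
  have hpair : (Subtype.val ⁻¹' ({x, y} : Set Pt) : Set T') =
      {⟨x, by decide⟩, ⟨y, by decide⟩} := by
    ext ⟨t, ht⟩
    cases t <;> simp
  rw [hpair]
  exact not_isPreconnected_pair (hxz.preimage continuous_subtype_val)
    (hyz.preimage continuous_subtype_val) (by simp) (by simp) (by simp) (by simp)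

end Pt

/-- In the subspace T' = T∖{a}, the set {x,y,b} is regular closed, its
interior in T' equals {x,y}, and {x,y} is not a preconnected subspace of T'; hence
{x,y,b} is not internally connected. -/
theorem stmt9 :
    (Subtype.val ⁻¹' ({x, y, b} : Set Pt) : Set {t : Pt // t ≠ a}) =
      closure (interior (Subtype.val ⁻¹' ({x, y, b} : Set Pt) : Set {t : Pt // t ≠ a})) ∧
    interior (Subtype.val ⁻¹' ({x, y, b} : Set Pt) : Set {t : Pt // t ≠ a}) =
      (Subtype.val ⁻¹' ({x, y} : Set Pt) : Set {t : Pt // t ≠ a}) ∧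
    ¬ IsPreconnected (Subtype.val ⁻¹' ({x, y} : Set Pt) : Set {t : Pt // t ≠ a}) ∧
    ¬ IsConnected
      (interior (Subtype.val ⁻¹' ({x, y, b} : Set Pt) : Set {t : Pt // t ≠ a})) := by
  rw [Pt.interior_preimage_xyb, Pt.closure_preimage_xy]
  exact ⟨rfl, rfl, Pt.not_isPreconnected_preimage_xy,
    fun h => Pt.not_isPreconnected_preimage_xy h.isPreconnected⟩
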